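/- Let (R, m) be a Noetherian local ring and F = {F_n}_{n∈ℤ} a Hilbert filtration of ideals in R. Let a_1, …, a_r ∈ R (r > 0) with a_i ∈ F_{n_i} and n_i ≥ 0. If a_1 t^{n_1}, a_2 t^{n_2}, …, a_r t^{n_r} ∈ R'(F) forms a regular sequence on the associated graded ring G(F), then a_1, a_2, …, a_r forms a regular sequence on R and the equality (a_1, a_2, …, a_r) ∩ F_n = Σ_{j=1}^r a_j F_{n−n_j} holds for all n ∈ ℤ. -/

import Mathlib

open IsLocalRing

noncomputable section
universe u

/-! ### Length, depth, dimension, Cohen-Macaulayness -/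

/-- The length of a module: the Krull dimension of its lattice of submodules. -/
noncomputable def moduleLength (R M : Type*) [CommRing R] [AddCommGroup M] [Module R M] :
    WithBot ℕ∞ :=
  Order.krullDim (Submodule R M)

/-- The depth of a module `M` with respect to an ideal `I`: the supremum of lengths of
`M`-regular sequences consisting of elements of `I`. -/
noncomputable def idealDepth {R : Type*} [CommRing R] (I : Ideal R)
    (M : Type*) [AddCommGroup M] [Module R M] : ℕ∞ :=
  sSup {n : ℕ∞ | ∃ rs : List R, (rs.length : ℕ∞) = n ∧ (∀ r ∈ rs, r ∈ I) ∧
    RingTheory.Sequence.IsRegular M rs}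

/-- The depth of a local ring. -/
noncomputable def ringDepth (R : Type*) [CommRing R] [IsLocalRing R] : ℕ∞ :=
  idealDepth (maximalIdeal R) R

/-- The depth of a module over a local ring. -/
noncomputable def moduleDepth (R : Type*) [CommRing R] [IsLocalRing R]
    (M : Type*) [AddCommGroup M] [Module R M] : ℕ∞ :=
  idealDepth (maximalIdeal R) M

/-- The dimension of a module: the Krull dimension of `R/ann M`. -/
noncomputable def moduleDim (R M : Type*) [CommRing R] [AddCommGroup M] [Module R M] :
    WithBot ℕ∞ :=
  ringKrullDim (R ⧸ Module.annihilator R M)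

/-- A local ring is Cohen-Macaulay if its depth equals its Krull dimension. -/
def IsCohenMacaulayLocalRing (R : Type*) [CommRing R] [IsLocalRing R] : Prop :=
  (ringDepth R : WithBot ℕ∞) = ringKrullDim R

/-- A module over a local ring is Cohen-Macaulay if its depth equals its dimension. -/
def IsCohenMacaulayModule (R : Type*) [CommRing R] [IsLocalRing R]
    (M : Type*) [AddCommGroup M] [Module R M] : Prop :=
  (moduleDepth R M : WithBot ℕ∞) = moduleDim R M

/-! ### Injective envelopes, local cohomology, canonical modules -/

/-- `E` is an injective envelope (injective hull) of `N` over `R`: `E` is injective and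
contains a copy of `N` as an essential submodule. -/
def IsInjectiveEnvelope (R N E : Type*) [CommRing R] [AddCommGroup N] [Module R N]
    [AddCommGroup E] [Module R E] : Prop :=
  Module.Injective R E ∧
  ∃ f : N →ₗ[R] E, Function.Injective f ∧
    ∀ W : Submodule R E, W ≠ ⊥ → W ⊓ LinearMap.range f ≠ ⊥

/-- The `i`-th local cohomology of the `R`-module `M` with support in the ideal `I`. -/
noncomputable def LocalCohomology {R : Type u} [CommRing R] (i : ℕ) (I : Ideal R)
    (M : Type u) [AddCommGroup M] [Module R M] : ModuleCat.{u} R :=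
  (localCohomology I i).obj (ModuleCat.of R M)

/-- `K` is a canonical module of `R`, where `𝔪` plays the role of the maximal ideal:
`K` is finitely generated and `R̂ ⊗_R K ≅ Hom_{R̂}(H^d_{𝔪R̂}(R̂), E_{R̂}(R̂/𝔪R̂))`, where
`R̂` is the `𝔪`-adic completion and `d = dim R`. -/
def IsCanonicalModuleAt (R : Type u) [CommRing R] (𝔪 : Ideal R)
    (K : Type u) [AddCommGroup K] [Module R K] : Prop :=
  Module.Finite R K ∧
  ∃ d : ℕ, ringKrullDim R = d ∧
    ∃ (E : Type u) (_ : AddCommGroup E) (_ : Module (AdicCompletion 𝔪 R) E),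
      IsInjectiveEnvelope (AdicCompletion 𝔪 R)
        ((AdicCompletion 𝔪 R) ⧸ 𝔪.map (algebraMap R (AdicCompletion 𝔪 R))) E ∧
      Nonempty ((TensorProduct R (AdicCompletion 𝔪 R) K) ≃ₗ[AdicCompletion 𝔪 R]
        (↥(LocalCohomology d (𝔪.map (algebraMap R (AdicCompletion 𝔪 R)))
            (AdicCompletion 𝔪 R)) →ₗ[AdicCompletion 𝔪 R] E))

/-- `R` has a canonical module (with respect to the ideal `𝔪`). -/
def HasCanonicalModuleAt (R : Type u) [CommRing R] (𝔪 : Ideal R) : Prop :=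
  ∃ (K : Type u) (_ : AddCommGroup K) (_ : Module R K), IsCanonicalModuleAt R 𝔪 K

/-- A ring `R`, with `𝔪` its ((graded) maximal) ideal, is quasi-Gorenstein
if it admits a canonical module `K` with `K ≅ R`. -/
def IsQuasiGorensteinAt (R : Type u) [CommRing R] (𝔪 : Ideal R) : Prop :=
  ∃ (K : Type u) (_ : AddCommGroup K) (_ : Module R K),
    IsCanonicalModuleAt R 𝔪 K ∧ Nonempty (K ≃ₗ[R] R)

/-- A local ring is quasi-Gorenstein if it admits a canonical module isomorphic to itself. -/
def IsQuasiGorensteinLocalRing (R : Type u) [CommRing R] [IsLocalRing R] : Prop :=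
  IsQuasiGorensteinAt R (maximalIdeal R)

/-- A ring is Gorenstein at `𝔪` if it is Cohen-Macaulay (depth = dimension) and
quasi-Gorenstein there. -/
def IsGorensteinAt (R : Type u) [CommRing R] (𝔪 : Ideal R) : Prop :=
  (idealDepth 𝔪 R : WithBot ℕ∞) = ringKrullDim R ∧ IsQuasiGorensteinAt R 𝔪

/-- A local ring is Gorenstein iff it is Cohen-Macaulay and quasi-Gorenstein. -/
def IsGorensteinLocalRing (R : Type u) [CommRing R] [IsLocalRing R] : Prop :=
  IsGorensteinAt R (maximalIdeal R)

/-- A Gorenstein ring: a Noetherian ring all of whose localizations at primes are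
Gorenstein local rings. -/
def IsGorensteinRing (S : Type u) [CommRing S] : Prop :=
  IsNoetherianRing S ∧ ∀ (P : Ideal S) (hP : P.IsPrime),
    letI := hP
    IsGorensteinLocalRing (Localization.AtPrime P)

/-- The module `M` has finite local cohomology (FLC) with respect to `𝔪`:
`H^i_𝔪(M)` is finitely generated for all `i ≠ dim M`. -/
def HasFLCAt (R : Type u) [CommRing R] (𝔪 : Ideal R)
    (M : Type u) [AddCommGroup M] [Module R M] : Prop :=
  ∀ i : ℕ, (i : WithBot ℕ∞) ≠ moduleDim R M → Module.Finite R ↥(LocalCohomology i 𝔪 M)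

/-! ### Multiplicity and `Assh` -/

/-- The multiplicity `e₀(x, M)`: the leading coefficient of the Hilbert function
`n ↦ ℓ_R(M/xⁿM)`, which eventually agrees with a linear polynomial `a·n + b`
when `dim M ≤ 1`. -/
noncomputable def hilbMult {R : Type*} [CommRing R] (x : R)
    (M : Type*) [AddCommGroup M] [Module R M] : ℕ :=
  letI := Classical.propDecidable
  if h : ∃ (a : ℕ) (b : ℤ), ∀ᶠ n : ℕ in Filter.atTop,
      moduleLength R (M ⧸ ((Ideal.span {x} ^ n) • (⊤ : Submodule R M)))
        = ((((a : ℤ) * n + b).toNat : ℕ) : WithBot ℕ∞)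
  then h.choose else 0

/-- `Assh_R M` : the primes in the support of `M` with `dim R/p = dim M`. -/
def AsshSet (R M : Type*) [CommRing R] [AddCommGroup M] [Module R M] :
    Set (PrimeSpectrum R) :=
  {p | p ∈ Module.support R M ∧ ringKrullDim (R ⧸ p.asIdeal) = moduleDim R M}

/-! ### Filtrations of ideals and blow-up algebras -/

/-- A filtration of ideals of `R`: a family `F = {F n}_{n ∈ ℤ}` of ideals with
`F (n+1) ⊆ F n`, `F m * F n ⊆ F (m+n)` and `F 0 = R`. -/
structure IdealFiltration (R : Type u) [CommRing R] : Type u where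
  F : ℤ → Ideal R
  succ_le : ∀ n : ℤ, F (n + 1) ≤ F n
  mul_le : ∀ m n : ℤ, F m * F n ≤ F (m + n)
  zero_eq : F 0 = ⊤

namespace IdealFiltration

variable {R : Type u} [CommRing R] (𝓕 : IdealFiltration R)

lemma neg_one_eq_top : 𝓕.F (-1) = ⊤ := by
  have := 𝓕.succ_le (-1)
  rw [show (-1 : ℤ) + 1 = 0 by ring, 𝓕.zero_eq] at this
  exact top_le_iff.mp this

/-- The extended Rees algebra `R'(F) = ⊕_{n ∈ ℤ} F_n t^n ⊆ R[t, t⁻¹]`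
of a filtration of ideals. -/
def extendedReesAlgebra : Subalgebra R (LaurentPolynomial R) where
  carrier := {f | ∀ n : ℤ, f.coeff n ∈ 𝓕.F n}
  add_mem' := by
    intro a b ha hb n
    simpa using (𝓕.F n).add_mem (ha n) (hb n)
  mul_mem' := by
    classical
    intro a b ha hb n
    show (a * b).coeff n ∈ 𝓕.F n
    rw [AddMonoidAlgebra.coeff_mul]
    refine Submodule.finsuppSum_mem _ _ _ _ fun i _ => ?_
    refine Submodule.finsuppSum_mem _ _ _ _ fun j _ => ?_
    try dsimp only
    split_ifs with hij
    · exact hij ▸ 𝓕.mul_le i j (Ideal.mul_mem_mul (ha i) (hb j))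
    · exact (𝓕.F n).zero_mem
  algebraMap_mem' := by
    intro r n
    show (Finsupp.single 0 r) n ∈ 𝓕.F n
    rw [Finsupp.single_apply]
    split_ifs with h
    · rw [← h, 𝓕.zero_eq]; trivial
    · exact (𝓕.F n).zero_mem

lemma single_mem {n : ℤ} {a : R} (ha : a ∈ 𝓕.F n) :
    (AddMonoidAlgebra.single n a : LaurentPolynomial R) ∈ 𝓕.extendedReesAlgebra := by
  intro k
  show (Finsupp.single n a : ℤ →₀ R) k ∈ 𝓕.F k
  rw [Finsupp.single_apply]
  split_ifs with h
  · exact h ▸ ha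
  · exact (𝓕.F k).zero_mem

/-- The element `t⁻¹` of the extended Rees algebra. -/
def tinv : 𝓕.extendedReesAlgebra :=
  ⟨AddMonoidAlgebra.single (-1) 1, 𝓕.single_mem (by rw [𝓕.neg_one_eq_top]; trivial)⟩

/-- The associated graded ring `G(F) = R'(F)/t⁻¹R'(F) ≅ ⊕_{n ≥ 0} F_n/F_{n+1}`. -/
def gradedRing : Type u :=
  𝓕.extendedReesAlgebra ⧸ Ideal.span {𝓕.tinv}

instance : CommRing 𝓕.gradedRing :=
  inferInstanceAs (CommRing (𝓕.extendedReesAlgebra ⧸ Ideal.span {𝓕.tinv}))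

instance : Algebra 𝓕.extendedReesAlgebra 𝓕.gradedRing :=
  inferInstanceAs (Algebra 𝓕.extendedReesAlgebra (𝓕.extendedReesAlgebra ⧸ Ideal.span {𝓕.tinv}))

/-- The natural quotient map `R'(F) → G(F)`. -/
def toGradedRing : 𝓕.extendedReesAlgebra →+* 𝓕.gradedRing :=
  Ideal.Quotient.mk (Ideal.span {𝓕.tinv})

/-- An element of the extended Rees algebra is homogeneous (of degree `n`) if it is
of the form `a tⁿ`. -/
def IsHomogeneousElem (x : 𝓕.extendedReesAlgebra) : Prop :=
  ∃ (n : ℤ) (a : R), (x : LaurentPolynomial R) = AddMonoidAlgebra.single n a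

/-- Homogeneous of non-negative degree. -/
def IsHomogeneousElemOfNonnegDegree (x : 𝓕.extendedReesAlgebra) : Prop :=
  ∃ (n : ℤ) (a : R), 0 ≤ n ∧ (x : LaurentPolynomial R) = AddMonoidAlgebra.single n a

/-- An element of the associated graded ring is homogeneous if it is the image of a
homogeneous element of the extended Rees algebra. -/
def IsHomogeneousElemG (g : 𝓕.gradedRing) : Prop :=
  ∃ x : 𝓕.extendedReesAlgebra, 𝓕.IsHomogeneousElem x ∧ g = 𝓕.toGradedRing x

/-- An ideal of the extended Rees algebra is graded (homogeneous) if it is generated by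
homogeneous elements. -/
def IsGradedIdeal (P : Ideal 𝓕.extendedReesAlgebra) : Prop :=
  ∃ S : Set 𝓕.extendedReesAlgebra, (∀ x ∈ S, 𝓕.IsHomogeneousElem x) ∧ P = Ideal.span S

/-- An ideal of the associated graded ring is graded (homogeneous) if it is generated by
homogeneous elements. -/
def IsGradedIdealG (Q : Ideal 𝓕.gradedRing) : Prop :=
  ∃ S : Set 𝓕.gradedRing, (∀ g ∈ S, 𝓕.IsHomogeneousElemG g) ∧ Q = Ideal.span S

/-- The unique graded maximal ideal `𝔐 = m ⊕ (⊕_{n ≠ 0} F_n t^n)` of the extended Rees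
algebra of a filtration over a local ring. -/
def gradedMaxIdeal [IsLocalRing R] : Ideal 𝓕.extendedReesAlgebra :=
  Ideal.span {x | ∃ (n : ℤ) (a : R), (x : LaurentPolynomial R) = AddMonoidAlgebra.single n a ∧
    a ∈ 𝓕.F n ∧ (n = 0 → a ∈ maximalIdeal R)}

/-- The unique graded maximal ideal `𝔑` of the associated graded ring. -/
def gradedMaxIdealG [IsLocalRing R] : Ideal 𝓕.gradedRing :=
  (𝓕.gradedMaxIdeal).map 𝓕.toGradedRing

/-- The irrelevant ideal `G(F)_+ = ⊕_{n > 0} F_n/F_{n+1}` of the associated graded ring. -/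
def irrelevantIdealG : Ideal 𝓕.gradedRing :=
  Ideal.map 𝓕.toGradedRing
    (Ideal.span {x : 𝓕.extendedReesAlgebra | ∃ (n : ℤ) (a : R), 0 < n ∧
      (x : LaurentPolynomial R) = AddMonoidAlgebra.single n a ∧ a ∈ 𝓕.F n})

/-- A filtration is Noetherian if its extended Rees algebra is a Noetherian ring. -/
def IsNoetherianFiltration : Prop :=
  IsNoetherianRing 𝓕.extendedReesAlgebra

/-- A Hilbert filtration: the extended Rees algebra is Noetherian, `F 1` is `m`-primary
and `F (n+1) = F 1 * F n` for all large `n`. -/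
def IsHilbertFiltration [IsLocalRing R] : Prop :=
  IsNoetherianRing 𝓕.extendedReesAlgebra ∧ (𝓕.F 1).radical = maximalIdeal R ∧
    ∃ N : ℤ, ∀ n ≥ N, 𝓕.F (n + 1) = 𝓕.F 1 * 𝓕.F n

/-- The quotient filtration `F/I` on `R/I`. -/
def quotFiltration (I : Ideal R) : IdealFiltration (R ⧸ I) where
  F n := (𝓕.F n).map (Ideal.Quotient.mk I)
  succ_le n := Ideal.map_mono (𝓕.succ_le n)
  mul_le m n := by
    rw [← Ideal.map_mul]
    exact Ideal.map_mono (𝓕.mul_le m n)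
  zero_eq := by
    show (𝓕.F 0).map (Ideal.Quotient.mk I) = ⊤
    rw [𝓕.zero_eq, Ideal.map_top]

/-- The extension `p' = pR[t,t⁻¹] ∩ R'(F)` of a prime `p ⊆ R` to the extended
Rees algebra. -/
def primeExt (p : Ideal R) : Ideal 𝓕.extendedReesAlgebra :=
  Ideal.comap 𝓕.extendedReesAlgebra.val
    (Ideal.map (algebraMap R (LaurentPolynomial R)) p)

end IdealFiltration

/-- The `I`-adic filtration of an ideal `I` (with `F n = R` for `n ≤ 0`). -/
def adicFiltration {R : Type u} [CommRing R] (I : Ideal R) : IdealFiltration R where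
  F n := I ^ n.toNat
  succ_le n := Ideal.pow_le_pow_right (by omega)
  mul_le m n := by
    rw [← pow_add]
    exact Ideal.pow_le_pow_right (by omega)
  zero_eq := by simp




set_option synthInstance.maxHeartbeats 1000000
set_option maxHeartbeats 2000000

section AuxQuot

variable {A : Type*} [CommRing A]

lemma aux_isSMulRegular_quotient {N : Submodule A A} {c : A}
    (H : ∀ y : A, c * y ∈ N → y ∈ N) : IsSMulRegular (A ⧸ N) c := by
  intro z₁ z₂ h
  obtain ⟨y₁, rfl⟩ := Submodule.Quotient.mk_surjective N z₁
  obtain ⟨y₂, rfl⟩ := Submodule.Quotient.mk_surjective N z₂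
  simp only [← Submodule.Quotient.mk_smul, smul_eq_mul] at h
  rw [Submodule.Quotient.eq] at h ⊢
  exact H (y₁ - y₂) (by rw [mul_sub]; exact h)

lemma aux_smul_top_quot (I J : Ideal A) :
    (J • ⊤ : Submodule A (A ⧸ I)) = Submodule.map I.mkQ J :=
  calc (J • ⊤ : Submodule A (A ⧸ I))
      = J • Submodule.map I.mkQ ⊤ := by rw [Submodule.map_top, Submodule.range_mkQ]
    _ = Submodule.map I.mkQ (J • ⊤) := (Submodule.map_smul'' J ⊤ I.mkQ).symm
    _ = Submodule.map I.mkQ J := by rw [Ideal.smul_eq_mul, Ideal.mul_top]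

lemma aux_mem_smul_top_quot {I J : Ideal A} {w : A} :
    (Submodule.Quotient.mk w : A ⧸ I) ∈ (J • ⊤ : Submodule A (A ⧸ I)) ↔ w ∈ I ⊔ J := by
  rw [aux_smul_top_quot, Submodule.mem_map]
  constructor
  · rintro ⟨v, hvJ, hv⟩
    have hvw : v - w ∈ I := by
      rw [← Submodule.Quotient.eq]; exact hv
    have hw : w = (w - v) + v := by ring
    rw [hw]
    exact Submodule.add_mem _
      (Submodule.mem_sup_left (by simpa using I.neg_mem hvw))
      (Submodule.mem_sup_right hvJ)
  · intro hw
    obtain ⟨p, hp, q, hq, rfl⟩ := Submodule.mem_sup.mp hw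
    exact ⟨q, hq, by rw [Submodule.mkQ_apply, Submodule.Quotient.eq]; simpa using I.neg_mem hp⟩

lemma aux_reg_of_quot_quot {I J : Ideal A} {c : A}
    (H : IsSMulRegular ((A ⧸ I) ⧸ (J • ⊤ : Submodule A (A ⧸ I))) c)
    {y : A} (hy : c * y ∈ I ⊔ J) : y ∈ I ⊔ J := by
  have h0 : (Submodule.Quotient.mk (Submodule.Quotient.mk y : A ⧸ I) :
      ((A ⧸ I) ⧸ (J • ⊤ : Submodule A (A ⧸ I)))) = 0 := by
    apply H
    show c • _ = c • (0 : _)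
    rw [smul_zero, ← Submodule.Quotient.mk_smul, ← Submodule.Quotient.mk_smul,
      Submodule.Quotient.mk_eq_zero]
    exact aux_mem_smul_top_quot.mpr (by simpa [smul_eq_mul] using hy)
  rw [Submodule.Quotient.mk_eq_zero] at h0
  exact aux_mem_smul_top_quot.mp h0

/-- The span of the first `j` elements of a family. -/
def auxX {r : ℕ} (x : Fin r → A) (j : ℕ) : Ideal A :=
  Ideal.span (Set.range fun i : Fin r => if (i : ℕ) < j then x i else 0)

lemma mem_auxX_gen {r : ℕ} (x : Fin r → A) {j : ℕ} {i : Fin r} (h : (i : ℕ) < j) :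
    x i ∈ auxX x j :=
  Ideal.subset_span ⟨i, by simp only [if_pos h]⟩

lemma auxX_zero {r : ℕ} (x : Fin r → A) : auxX x 0 = ⊥ := by
  rw [eq_bot_iff, auxX, Ideal.span_le]
  rintro z ⟨i, rfl⟩
  simp

lemma auxX_succ {r : ℕ} (x : Fin r → A) (j : ℕ) (h : j < r) :
    auxX x (j + 1) = auxX x j ⊔ Ideal.span {x ⟨j, h⟩} := by
  apply le_antisymm
  · rw [auxX, Ideal.span_le]
    rintro z ⟨i, rfl⟩
    by_cases h1 : (i : ℕ) < j
    · simp only [if_pos (by omega : (i : ℕ) < j + 1)]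
      exact Submodule.mem_sup_left (mem_auxX_gen x h1)
    · by_cases h2 : (i : ℕ) < j + 1
      · have hi : i = ⟨j, h⟩ := Fin.ext (by simpa using (by omega : (i : ℕ) = j))
        subst hi
        simp only [if_pos h2]
        exact Submodule.mem_sup_right (Ideal.subset_span rfl)
      · simp only [if_neg h2]
        exact zero_mem _
  · apply sup_le
    · rw [auxX, Ideal.span_le]
      rintro z ⟨i, rfl⟩
      by_cases h1 : (i : ℕ) < j
      · simp only [if_pos h1]
        exact mem_auxX_gen x (by omega)
      · simp only [if_neg h1]
        exact zero_mem _
    · rw [Ideal.span_le, Set.singleton_subset_iff]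
      exact mem_auxX_gen x (by simp)

lemma auxX_succ_of_le {r : ℕ} (x : Fin r → A) (j : ℕ) (h : r ≤ j) :
    auxX x (j + 1) = auxX x j := by
  unfold auxX
  congr 1
  apply congrArg
  funext i
  have := i.isLt
  rw [if_pos (by omega), if_pos (by omega)]

lemma auxX_ofList_take {r : ℕ} (x : Fin r → A) (j : ℕ) :
    Ideal.ofList ((List.ofFn x).take j) = auxX x j := by
  apply le_antisymm
  · rw [Ideal.span_le]
    intro z hz
    simp only [Set.mem_setOf_eq] at hz
    rw [List.mem_take_iff_getElem] at hz
    obtain ⟨i, hi, rfl⟩ := hz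
    have hir : i < r := by simpa using (lt_min_iff.mp hi).2
    have hij : i < j := (lt_min_iff.mp hi).1
    rw [List.getElem_ofFn]
    exact mem_auxX_gen x (i := ⟨i, hir⟩) hij
  · rw [auxX, Ideal.span_le]
    rintro z ⟨i, rfl⟩
    by_cases h1 : (i : ℕ) < j
    · simp only [if_pos h1]
      apply Ideal.subset_span
      show x i ∈ (List.ofFn x).take j
      rw [List.mem_take_iff_getElem]
      refine ⟨i, by simp [lt_min_iff, h1, i.isLt], by rw [List.getElem_ofFn]⟩
    · simp only [if_neg h1]
      exact zero_mem _

lemma auxX_top {r : ℕ} (x : Fin r → A) :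
    Ideal.ofList (List.ofFn x) = auxX x r := by
  have h1 : Ideal.ofList (List.ofFn x) = Ideal.span (Set.range x) := by
    unfold Ideal.ofList
    congr 1
    ext z
    simp [List.mem_ofFn]
  rw [h1, auxX]
  congr 1
  apply congrArg
  funext i
  rw [if_pos i.isLt]

end AuxQuot

section AuxRees
variable {R : Type u} [CommRing R] (𝓕 : IdealFiltration R)

lemma IdealFiltration.mem_eRA_iff {f : LaurentPolynomial R} :
    f ∈ 𝓕.extendedReesAlgebra ↔ ∀ k : ℤ, f.coeff k ∈ 𝓕.F k := Iff.rfl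

lemma IdealFiltration.coeff_mem (y : 𝓕.extendedReesAlgebra) (k : ℤ) :
    (y : LaurentPolynomial R).coeff k ∈ 𝓕.F k := (𝓕.mem_eRA_iff.mp y.2) k

lemma IdealFiltration.tinv_coe : ((𝓕.tinv : 𝓕.extendedReesAlgebra) : LaurentPolynomial R) =
    AddMonoidAlgebra.single (-1 : ℤ) (1 : R) := rfl

lemma IdealFiltration.F_antitone {k l : ℤ} (h : k ≤ l) : 𝓕.F l ≤ 𝓕.F k := by
  have key : ∀ d : ℕ, ∀ k : ℤ, 𝓕.F (k + d) ≤ 𝓕.F k := by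
    intro d
    induction d with
    | zero => simp
    | succ d ih =>
      intro k
      calc 𝓕.F (k + ((d + 1 : ℕ) : ℤ)) = 𝓕.F ((k + d) + 1) := by congr 1; push_cast; ring
      _ ≤ 𝓕.F (k + d) := 𝓕.succ_le _
      _ ≤ 𝓕.F k := ih k
  have hl : l = k + (((l - k).toNat : ℕ) : ℤ) := by omega
  rw [hl]
  exact key _ k

lemma IdealFiltration.F_eq_top_of_nonpos {k : ℤ} (h : k ≤ 0) : 𝓕.F k = ⊤ :=
  eq_top_iff.mpr (𝓕.zero_eq ▸ 𝓕.F_antitone h)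

/-- The homogeneous element `c tᵏ` of the extended Rees algebra. -/
def IdealFiltration.sg (k : ℤ) {c : R} (hc : c ∈ 𝓕.F k) : 𝓕.extendedReesAlgebra :=
  ⟨AddMonoidAlgebra.single k c, 𝓕.single_mem hc⟩

lemma IdealFiltration.sg_coe (k : ℤ) {c : R} (hc : c ∈ 𝓕.F k) :
    ((𝓕.sg k hc : 𝓕.extendedReesAlgebra) : LaurentPolynomial R) = AddMonoidAlgebra.single k c := rfl

lemma IdealFiltration.sg_mul_coeff (k m : ℤ) {c : R} (hc : c ∈ 𝓕.F k)
    (y : 𝓕.extendedReesAlgebra) :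
    ((𝓕.sg k hc * y : 𝓕.extendedReesAlgebra) : LaurentPolynomial R).coeff m
      = c * (y : LaurentPolynomial R).coeff (m - k) := by
  have h1 : ((𝓕.sg k hc * y : 𝓕.extendedReesAlgebra) : LaurentPolynomial R)
      = AddMonoidAlgebra.single k c * (y : LaurentPolynomial R) := rfl
  rw [h1, AddMonoidAlgebra.coeff_single_mul_apply, neg_add_eq_sub]

lemma IdealFiltration.tinv_mul_coeff (y : 𝓕.extendedReesAlgebra) (m : ℤ) :
    ((𝓕.tinv * y : 𝓕.extendedReesAlgebra) : LaurentPolynomial R).coeff m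
      = (y : LaurentPolynomial R).coeff (m + 1) := by
  have h1 : ((𝓕.tinv * y : 𝓕.extendedReesAlgebra) : LaurentPolynomial R)
      = AddMonoidAlgebra.single (-1 : ℤ) (1 : R) * (y : LaurentPolynomial R) := rfl
  rw [h1, AddMonoidAlgebra.coeff_single_mul_apply, one_mul]
  exact congrArg _ (by ring)

lemma IdealFiltration.tinv_pow_coe (m : ℕ) :
    ((𝓕.tinv ^ m : 𝓕.extendedReesAlgebra) : LaurentPolynomial R)
      = AddMonoidAlgebra.single (-(m : ℤ)) (1 : R) := by
  rw [SubmonoidClass.coe_pow, IdealFiltration.tinv_coe]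
  rw [AddMonoidAlgebra.single_pow]
  simp

lemma IdealFiltration.tinv_pow_mul_sg (m : ℤ) (hm : 0 ≤ m) {c : R} (hc : c ∈ 𝓕.F m) :
    𝓕.tinv ^ m.toNat * 𝓕.sg m hc
      = 𝓕.sg 0 (show c ∈ 𝓕.F 0 by rw [𝓕.zero_eq]; trivial) := by
  apply Subtype.ext
  show ((𝓕.tinv ^ m.toNat * 𝓕.sg m hc : 𝓕.extendedReesAlgebra) : LaurentPolynomial R) = _
  rw [MulMemClass.coe_mul, IdealFiltration.tinv_pow_coe, IdealFiltration.sg_coe,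
    IdealFiltration.sg_coe, AddMonoidAlgebra.single_mul_single, one_mul]
  congr 1
  omega

lemma IdealFiltration.tinv_pow_mul_sg' (m : ℤ) (hm : m < 0) {c : R} (hc : c ∈ 𝓕.F m)
    (hc0 : c ∈ 𝓕.F 0) :
    𝓕.tinv ^ (-m).toNat * 𝓕.sg 0 hc0 = 𝓕.sg m hc := by
  apply Subtype.ext
  show ((𝓕.tinv ^ (-m).toNat * 𝓕.sg 0 hc0 : 𝓕.extendedReesAlgebra) : LaurentPolynomial R) = _
  rw [MulMemClass.coe_mul, IdealFiltration.tinv_pow_coe, IdealFiltration.sg_coe,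
    IdealFiltration.sg_coe, AddMonoidAlgebra.single_mul_single, one_mul]
  congr 1
  omega

variable {r : ℕ} (a : Fin r → R) (n : Fin r → ℤ) (ha : ∀ i, a i ∈ 𝓕.F (n i))

/-- The family of homogeneous elements `aᵢ tⁿⁱ`. -/
def IdealFiltration.sgF : Fin r → 𝓕.extendedReesAlgebra := fun i => 𝓕.sg (n i) (ha i)

lemma IdealFiltration.sgF_coe (i : Fin r) :
    ((𝓕.sgF a n ha i : 𝓕.extendedReesAlgebra) : LaurentPolynomial R)
      = AddMonoidAlgebra.single (n i) (a i) := rfl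

/-- Extracting coefficients from membership in the ideal generated by the first `j`
homogeneous elements. -/
lemma aux_coeff_mem (j : ℕ) (y : 𝓕.extendedReesAlgebra)
    (hy : y ∈ auxX (𝓕.sgF a n ha) j) (m : ℤ) :
    ∃ g : Fin r → R, (∀ i, g i ∈ 𝓕.F (m - n i)) ∧ (∀ i : Fin r, ¬((i : ℕ) < j) → g i = 0) ∧
      (y : LaurentPolynomial R).coeff m = ∑ i, a i * g i := by
  rw [auxX] at hy
  obtain ⟨c, hc⟩ := (Submodule.mem_span_range_iff_exists_fun _).mp hy
  refine ⟨fun i => if (i : ℕ) < j then ((c i : LaurentPolynomial R).coeff (m - n i)) else 0,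
    ?_, ?_, ?_⟩
  · intro i
    by_cases h : (i : ℕ) < j
    · simp only [if_pos h]; exact 𝓕.coeff_mem (c i) (m - n i)
    · simp only [if_neg h]; exact zero_mem _
  · intro i h; simp only [if_neg h]
  · have h2 := congrArg (fun z : 𝓕.extendedReesAlgebra => (z : LaurentPolynomial R).coeff m) hc
    rw [AddSubmonoidClass.coe_finset_sum, AddMonoidAlgebra.coeff_sum, Finset.sum_apply'] at h2
    rw [← h2]
    apply Finset.sum_congr rfl
    intro i _
    by_cases h : (i : ℕ) < j
    · simp only [if_pos h, smul_eq_mul, MulMemClass.coe_mul, mul_comm (c i : LaurentPolynomial R)]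
      show (((𝓕.sg (n i) (ha i) : 𝓕.extendedReesAlgebra) : LaurentPolynomial R)
        * (c i : LaurentPolynomial R)).coeff m = _
      rw [IdealFiltration.sg_coe, AddMonoidAlgebra.coeff_single_mul_apply, neg_add_eq_sub]
    · simp only [if_neg h, smul_zero, mul_zero]
      show (0 : LaurentPolynomial R).coeff m = 0
      simp

/-- Building membership in the ideal generated by the first `j` homogeneous elements
from a coefficient representation. -/
lemma aux_sg_mem_auxX (j : ℕ) (m : ℤ) (g : Fin r → R)
    (hg1 : ∀ i, g i ∈ 𝓕.F (m - n i)) (hg2 : ∀ i : Fin r, ¬((i : ℕ) < j) → g i = 0)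
    {c : R} (hc : c ∈ 𝓕.F m) (hcg : c = ∑ i, a i * g i) :
    𝓕.sg m hc ∈ auxX (𝓕.sgF a n ha) j := by
  have key : 𝓕.sg m hc
      = ∑ i, 𝓕.sg (m - n i) (hg1 i) * (if (i : ℕ) < j then 𝓕.sgF a n ha i else 0) := by
    apply Subtype.ext
    rw [AddSubmonoidClass.coe_finset_sum]
    show AddMonoidAlgebra.single m c = _
    rw [hcg, ← AddMonoidAlgebra.ofCoeff_single, Finsupp.single_finset_sum, AddMonoidAlgebra.ofCoeff_sum]
    apply Finset.sum_congr rfl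
    intro i _
    by_cases h : (i : ℕ) < j
    · simp only [if_pos h, MulMemClass.coe_mul, IdealFiltration.sg_coe,
        IdealFiltration.sgF_coe, AddMonoidAlgebra.single_mul_single, AddMonoidAlgebra.ofCoeff_single]
      rw [mul_comm (a i) (g i)]
      congr 1
      ring
    · rw [if_neg h, mul_zero]
      have h0 : a i * g i = 0 := by rw [hg2 i h, mul_zero]
      rw [h0]
      simp
  rw [key]
  apply Ideal.sum_mem
  intro i _
  by_cases h : (i : ℕ) < j
  · simp only [if_pos h]
    exact Ideal.mul_mem_left _ _ (mem_auxX_gen _ h)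
  · simp only [if_neg h, mul_zero]
    exact zero_mem _

lemma aux_S1core (l : List 𝓕.extendedReesAlgebra) (i : ℕ) (hi : i < l.length)
    (h : RingTheory.Sequence.IsRegular 𝓕.gradedRing l) (J : Ideal 𝓕.extendedReesAlgebra)
    (hJ : Ideal.ofList (l.take i) = J) (y : 𝓕.extendedReesAlgebra)
    (hy : l[i] * y ∈ Ideal.span {𝓕.tinv} ⊔ J) : y ∈ Ideal.span {𝓕.tinv} ⊔ J := by
  have hw := h.toIsWeaklyRegular.regular_mod_prev i hi
  rw [hJ] at hw
  exact aux_reg_of_quot_quot hw hy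

end AuxRees

/-- Proposition 2.2, (1) ⇒ (2). If `a₁t^{n₁}, …, a_rt^{n_r}` is a regular
sequence on `G(F)`, then `a₁, …, a_r` is a regular sequence on `R` and
`(a₁, …, a_r) ∩ F_m = Σ_j a_j F_{m - n_j}` for all `m ∈ ℤ`. -/
theorem statement_1 {R : Type u} [CommRing R] [IsLocalRing R] [IsNoetherianRing R]
    (𝓕 : IdealFiltration R) (h𝓕 : 𝓕.IsHilbertFiltration)
    (r : ℕ) (hr : 0 < r) (a : Fin r → R) (n : Fin r → ℤ) (hn : ∀ i, 0 ≤ n i)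
    (ha : ∀ i, a i ∈ 𝓕.F (n i))
    (hreg : RingTheory.Sequence.IsRegular 𝓕.gradedRing
      (List.ofFn fun i => (⟨AddMonoidAlgebra.single (n i) (a i), 𝓕.single_mem (ha i)⟩ :
        𝓕.extendedReesAlgebra))) :
    RingTheory.Sequence.IsRegular R (List.ofFn a) ∧
      ∀ m : ℤ, Ideal.span (Set.range a) ⊓ 𝓕.F m =
        ∑ j : Fin r, Ideal.span {a j} * 𝓕.F (m - n j) := by
  classical
  obtain ⟨-, hrad, N₀, hN₀⟩ := h𝓕
  have hx : (fun i => (⟨AddMonoidAlgebra.single (n i) (a i), 𝓕.single_mem (ha i)⟩ :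
      𝓕.extendedReesAlgebra)) = 𝓕.sgF a n ha := rfl
  rw [hx] at hreg
  have hF1 : 𝓕.F 1 ≤ IsLocalRing.maximalIdeal R := by
    rw [← hrad]; exact Ideal.le_radical
  -- Step 1: regularity of the homogeneous elements modulo `t⁻¹` and previous elements.
  have S1 : ∀ (i : Fin r) (y : 𝓕.extendedReesAlgebra),
      𝓕.sgF a n ha i * y ∈ Ideal.span {𝓕.tinv} ⊔ auxX (𝓕.sgF a n ha) (i : ℕ) →
        y ∈ Ideal.span {𝓕.tinv} ⊔ auxX (𝓕.sgF a n ha) (i : ℕ) := by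
    intro i y hy
    have hlen : (i : ℕ) < (List.ofFn (𝓕.sgF a n ha)).length := by simpa using i.isLt
    refine aux_S1core 𝓕 (List.ofFn (𝓕.sgF a n ha)) i hlen hreg _
      (auxX_ofList_take (𝓕.sgF a n ha) (i : ℕ)) y ?_
    have hget : (List.ofFn (𝓕.sgF a n ha))[(i : ℕ)]'hlen = 𝓕.sgF a n ha i := by
      rw [List.getElem_ofFn]
    rw [hget]
    exact hy
  -- `t⁻¹` is a nonzerodivisor.
  have hureg : ∀ y : 𝓕.extendedReesAlgebra, 𝓕.tinv * y = 0 → y = 0 := by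
    intro y hy
    have h1 : ((𝓕.tinv * y : 𝓕.extendedReesAlgebra) : LaurentPolynomial R) = 0 := by
      rw [hy]; rfl
    rw [MulMemClass.coe_mul] at h1
    have hT : ((𝓕.tinv : 𝓕.extendedReesAlgebra) : LaurentPolynomial R)
        = LaurentPolynomial.T (-1) := rfl
    rw [hT] at h1
    have h2 := (LaurentPolynomial.isUnit_T (R := R) (-1)).mul_right_eq_zero.mp h1
    exact Subtype.ext (by simpa using h2)
  -- Step 2: `t⁻¹` is regular modulo the first `j` elements.
  have S2 : ∀ (j : ℕ) (y : 𝓕.extendedReesAlgebra),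
      𝓕.tinv * y ∈ auxX (𝓕.sgF a n ha) j → y ∈ auxX (𝓕.sgF a n ha) j := by
    intro j
    induction j with
    | zero =>
      intro y hy
      rw [auxX_zero] at hy ⊢
      rw [Submodule.mem_bot] at hy ⊢
      exact hureg y hy
    | succ j ih =>
      by_cases hjr : j < r
      · intro y hy
        rw [auxX_succ _ j hjr] at hy ⊢
        obtain ⟨p, hp, q, hq, hpq⟩ := Submodule.mem_sup.mp hy
        obtain ⟨c, rfl⟩ := Ideal.mem_span_singleton'.mp hq
        have hc : 𝓕.sgF a n ha ⟨j, hjr⟩ * c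
            ∈ Ideal.span {𝓕.tinv} ⊔ auxX (𝓕.sgF a n ha) ((⟨j, hjr⟩ : Fin r) : ℕ) := by
          have he : 𝓕.sgF a n ha ⟨j, hjr⟩ * c = 𝓕.tinv * y - p := by
            rw [← hpq]; ring
          rw [he]
          exact sub_mem (Submodule.mem_sup_left (Ideal.mem_span_singleton'.mpr ⟨y, by ring⟩))
            (Submodule.mem_sup_right hp)
        have hc2 := S1 ⟨j, hjr⟩ c hc
        obtain ⟨p', hp', q', hq', hpq'⟩ := Submodule.mem_sup.mp hc2
        obtain ⟨d, rfl⟩ := Ideal.mem_span_singleton'.mp hp'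
        have key : 𝓕.tinv * (y - d * 𝓕.sgF a n ha ⟨j, hjr⟩) ∈ auxX (𝓕.sgF a n ha) j := by
          have he2 : 𝓕.tinv * (y - d * 𝓕.sgF a n ha ⟨j, hjr⟩)
              = p + q' * 𝓕.sgF a n ha ⟨j, hjr⟩ := by
            calc 𝓕.tinv * (y - d * 𝓕.sgF a n ha ⟨j, hjr⟩)
                = 𝓕.tinv * y - d * 𝓕.tinv * 𝓕.sgF a n ha ⟨j, hjr⟩ := by ring
              _ = (p + c * 𝓕.sgF a n ha ⟨j, hjr⟩) - d * 𝓕.tinv * 𝓕.sgF a n ha ⟨j, hjr⟩ := by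
                  rw [hpq]
              _ = p + (c - d * 𝓕.tinv) * 𝓕.sgF a n ha ⟨j, hjr⟩ := by ring
              _ = p + q' * 𝓕.sgF a n ha ⟨j, hjr⟩ := by rw [← hpq']; ring_nf
          rw [he2]
          exact add_mem hp (Ideal.mul_mem_right _ _ hq')
        have hfin := ih _ key
        have hy2 : y = (y - d * 𝓕.sgF a n ha ⟨j, hjr⟩) + d * 𝓕.sgF a n ha ⟨j, hjr⟩ := by ring
        rw [hy2]
        exact Submodule.add_mem _ (Submodule.mem_sup_left hfin)
          (Submodule.mem_sup_right (Ideal.mem_span_singleton'.mpr ⟨d, rfl⟩))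
      · intro y hy
        rw [auxX_succ_of_le _ j (by omega)] at hy ⊢
        exact ih y hy
  -- Iterated version of Step 2.
  have DC : ∀ (m : ℕ) (j : ℕ) (y : 𝓕.extendedReesAlgebra),
      𝓕.tinv ^ m * y ∈ auxX (𝓕.sgF a n ha) j → y ∈ auxX (𝓕.sgF a n ha) j := by
    intro m
    induction m with
    | zero => intro j y hy; simpa using hy
    | succ m ih =>
      intro j y hy
      have he : 𝓕.tinv ^ m * (𝓕.tinv * y) = 𝓕.tinv ^ (m + 1) * y := by ring
      exact S2 j y (ih j _ (by rw [he]; exact hy))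
  -- Step 3: the intersection formula for the first `j` elements.
  have G2 : ∀ (j : ℕ) (m : ℤ) (c : R), c ∈ auxX a j → c ∈ 𝓕.F m →
      ∃ g : Fin r → R, (∀ i, g i ∈ 𝓕.F (m - n i)) ∧ (∀ i : Fin r, ¬((i : ℕ) < j) → g i = 0) ∧
        c = ∑ i, a i * g i := by
    intro j m c hca hcm
    obtain ⟨b, hb⟩ := (Submodule.mem_span_range_iff_exists_fun _).mp hca
    have hc0 : c ∈ 𝓕.F 0 := by rw [𝓕.zero_eq]; trivial
    have h00 : 𝓕.sg 0 hc0 ∈ auxX (𝓕.sgF a n ha) j := by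
      refine aux_sg_mem_auxX 𝓕 a n ha j 0 (fun i => if (i : ℕ) < j then b i else 0)
        (fun i => by rw [𝓕.F_eq_top_of_nonpos (by have := hn i; omega)]; trivial)
        (fun i hij => by simp only [if_neg hij]) hc0 ?_
      rw [← hb]
      apply Finset.sum_congr rfl
      intro i _
      by_cases hij : (i : ℕ) < j
      · simp only [if_pos hij, smul_eq_mul]
        ring
      · simp only [if_neg hij, smul_zero, mul_zero]
    have hsm : 𝓕.sg m hcm ∈ auxX (𝓕.sgF a n ha) j := by
      rcases le_or_gt 0 m with hm | hm
      · apply DC m.toNat j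
        rw [𝓕.tinv_pow_mul_sg m hm hcm]
        exact h00
      · rw [← 𝓕.tinv_pow_mul_sg' m hm hcm hc0]
        exact Ideal.mul_mem_left _ _ h00
    obtain ⟨g, hg1, hg2, hg3⟩ := aux_coeff_mem 𝓕 a n ha j (𝓕.sg m hcm) hsm m
    refine ⟨g, hg1, hg2, ?_⟩
    calc c = ((𝓕.sg m hcm : 𝓕.extendedReesAlgebra) : LaurentPolynomial R).coeff m := by
          rw [𝓕.sg_coe, AddMonoidAlgebra.coeff_single]; exact (Finsupp.single_eq_same).symm
      _ = ∑ i, a i * g i := hg3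
  -- the elements `a i` are in the maximal ideal
  have haMem : ∀ i, a i ∈ IsLocalRing.maximalIdeal R := by
    intro i
    rcases lt_or_eq_of_le (hn i) with h0 | h0
    · exact hF1 (𝓕.F_antitone (by omega) (ha i))
    · by_contra hnu
      have hu : IsUnit (a i) := by
        simpa [IsLocalRing.mem_maximalIdeal, mem_nonunits_iff] using hnu
      have hxi : 𝓕.sgF a n ha i = algebraMap R 𝓕.extendedReesAlgebra (a i) := by
        apply Subtype.ext
        have h2 : algebraMap R (LaurentPolynomial R) (a i) = AddMonoidAlgebra.single 0 (a i) := by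
          simp [AddMonoidAlgebra.coe_algebraMap]
        have h3 : ((algebraMap R 𝓕.extendedReesAlgebra (a i) : 𝓕.extendedReesAlgebra) :
            LaurentPolynomial R) = algebraMap R (LaurentPolynomial R) (a i) := rfl
        rw [𝓕.sgF_coe, h3, h2, ← h0]
      have hXtop : auxX (𝓕.sgF a n ha) r = ⊤ :=
        Ideal.eq_top_of_isUnit_mem _ (mem_auxX_gen _ i.isLt)
          (hxi ▸ hu.map (algebraMap R 𝓕.extendedReesAlgebra))
      refine hreg.top_ne_smul ?_
      rw [auxX_top, hXtop, Submodule.top_smul]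
  -- Krull intersection ingredients
  have hN₁cast : (((max N₀ 0).toNat : ℕ) : ℤ) = max N₀ 0 := Int.toNat_of_nonneg (le_max_right _ _)
  have Fpow : ∀ k : ℕ, 𝓕.F (((max N₀ 0).toNat : ℤ) + k) ≤ (IsLocalRing.maximalIdeal R) ^ k := by
    intro k
    induction k with
    | zero =>
      rw [pow_zero, Ideal.one_eq_top]
      exact le_top
    | succ k ih =>
      have he : ((max N₀ 0).toNat : ℤ) + ((k + 1 : ℕ) : ℤ) = (((max N₀ 0).toNat : ℤ) + k) + 1 := by
        push_cast; ring
      rw [he, hN₀ _ (by omega)]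
      calc 𝓕.F 1 * 𝓕.F (((max N₀ 0).toNat : ℤ) + k)
          ≤ (IsLocalRing.maximalIdeal R) * (IsLocalRing.maximalIdeal R) ^ k :=
            Ideal.mul_mono hF1 ih
        _ = (IsLocalRing.maximalIdeal R) ^ (k + 1) := (pow_succ' _ _).symm
  have Krull : ∀ (J : Ideal R) (b : R),
      (∀ k : ℕ, ∃ f, f ∈ (IsLocalRing.maximalIdeal R) ^ k ∧ b - f ∈ J) → b ∈ J := by
    intro J b hb
    haveI : Module.Finite R (R ⧸ J) :=
      Module.Finite.of_surjective J.mkQ (Submodule.Quotient.mk_surjective J)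
    have hbot := Ideal.iInf_pow_smul_eq_bot_of_isLocalRing (M := R ⧸ J)
      (I := IsLocalRing.maximalIdeal R) (Ideal.IsMaximal.ne_top inferInstance)
    have hmem : (Submodule.Quotient.mk b : R ⧸ J)
        ∈ (⨅ k : ℕ, (IsLocalRing.maximalIdeal R) ^ k • (⊤ : Submodule R (R ⧸ J))) := by
      rw [Submodule.mem_iInf]
      intro k
      obtain ⟨f, hf, hbf⟩ := hb k
      rw [aux_smul_top_quot]
      refine Submodule.mem_map.mpr ⟨f, hf, ?_⟩
      rw [Submodule.mkQ_apply, Submodule.Quotient.eq]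
      simpa using J.neg_mem hbf
    rw [hbot] at hmem
    rwa [Submodule.mem_bot, Submodule.Quotient.mk_eq_zero] at hmem
  -- Step 4: weak regularity of the `a i` on `R`.
  have WR : ∀ (j : Fin r) (b : R), a j * b ∈ auxX a (j : ℕ) → b ∈ auxX a (j : ℕ) := by
    intro j b hab
    have claim : ∀ k : ℕ, ∃ f, f ∈ 𝓕.F (k : ℤ) ∧ b - f ∈ auxX a (j : ℕ) := by
      intro k
      induction k with
      | zero =>
        refine ⟨b, ?_, by simpa using zero_mem _⟩
        rw [show ((0 : ℕ) : ℤ) = 0 from rfl, 𝓕.zero_eq]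
        trivial
      | succ k ih =>
        obtain ⟨f, hf, hbf⟩ := ih
        have h1 : a j * f ∈ auxX a (j : ℕ) := by
          have he : a j * f = a j * b - a j * (b - f) := by ring
          rw [he]
          exact sub_mem hab (Ideal.mul_mem_left _ _ hbf)
        have h2 : a j * f ∈ 𝓕.F (n j + k) := 𝓕.mul_le _ _ (Ideal.mul_mem_mul (ha j) hf)
        obtain ⟨g, hg1, hg2, hg3⟩ := G2 (j : ℕ) (n j + k) _ h1 h2
        have hsf : 𝓕.sgF a n ha j * 𝓕.sg (k : ℤ) hf
            ∈ Ideal.span {𝓕.tinv} ⊔ auxX (𝓕.sgF a n ha) (j : ℕ) := by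
          apply Submodule.mem_sup_right
          have hmul : 𝓕.sgF a n ha j * 𝓕.sg (k : ℤ) hf = 𝓕.sg (n j + k) h2 := by
            apply Subtype.ext
            rw [MulMemClass.coe_mul, 𝓕.sgF_coe, 𝓕.sg_coe, 𝓕.sg_coe]
            show AddMonoidAlgebra.single (n j) (a j) * AddMonoidAlgebra.single (k : ℤ) f = _
            rw [AddMonoidAlgebra.single_mul_single]
          rw [hmul]
          exact aux_sg_mem_auxX 𝓕 a n ha (j : ℕ) (n j + k) g hg1 hg2 h2 hg3
        have hss := S1 j (𝓕.sg (k : ℤ) hf) hsf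
        obtain ⟨p, hp, q, hq, hpq⟩ := Submodule.mem_sup.mp hss
        obtain ⟨w, rfl⟩ := Ideal.mem_span_singleton'.mp hp
        have h6 : ((w * 𝓕.tinv : 𝓕.extendedReesAlgebra) : LaurentPolynomial R).coeff (k : ℤ)
            = (w : LaurentPolynomial R).coeff ((k : ℤ) + 1) := by
          rw [mul_comm]
          exact 𝓕.tinv_mul_coeff w k
        have hfq : f = (w : LaurentPolynomial R).coeff ((k : ℤ) + 1)
            + (q : LaurentPolynomial R).coeff (k : ℤ) := by
          have h5 := congrArg
            (fun z : 𝓕.extendedReesAlgebra => (z : LaurentPolynomial R).coeff (k : ℤ)) hpq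
          rw [AddMemClass.coe_add, AddMonoidAlgebra.coeff_add, Finsupp.add_apply, h6] at h5
          rw [h5, 𝓕.sg_coe, AddMonoidAlgebra.coeff_single, Finsupp.single_eq_same]
        obtain ⟨g', hg1', hg2', hg3'⟩ := aux_coeff_mem 𝓕 a n ha (j : ℕ) q hq (k : ℤ)
        have hq_mem : (q : LaurentPolynomial R).coeff (k : ℤ) ∈ auxX a (j : ℕ) := by
          rw [hg3']
          apply Ideal.sum_mem
          intro i _
          by_cases hij : (i : ℕ) < (j : ℕ)
          · exact Ideal.mul_mem_right _ _ (Ideal.subset_span ⟨i, by simp only [if_pos hij]⟩)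
          · rw [hg2' i hij, mul_zero]
            exact zero_mem _
        refine ⟨(w : LaurentPolynomial R).coeff ((k : ℤ) + 1), ?_, ?_⟩
        · have hcast : (((k + 1 : ℕ)) : ℤ) = (k : ℤ) + 1 := by push_cast; ring
          rw [hcast]
          exact 𝓕.coeff_mem w _
        · have he3 : b - (w : LaurentPolynomial R).coeff ((k : ℤ) + 1)
              = (b - f) + (q : LaurentPolynomial R).coeff (k : ℤ) := by
            rw [hfq]; ring
          rw [he3]
          exact add_mem hbf hq_mem
    apply Krull
    intro k
    obtain ⟨f, hf, hbf⟩ := claim ((max N₀ 0).toNat + k)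
    refine ⟨f, ?_, hbf⟩
    apply Fpow k
    have hcast : ((((max N₀ 0).toNat + k : ℕ)) : ℤ) = (((max N₀ 0).toNat : ℕ) : ℤ) + k := by
      push_cast; ring
    rw [← hcast]
    exact hf
  constructor
  · -- the `a i` form a regular sequence on `R`
    refine ⟨?_, ?_⟩
    · rw [RingTheory.Sequence.isWeaklyRegular_iff]
      intro i hi
      have hir : i < r := by simpa using hi
      have e2 : (Ideal.ofList ((List.ofFn a).take i) • ⊤ : Submodule R R) = auxX a i := by
        rw [Ideal.smul_eq_mul, Ideal.mul_top, auxX_ofList_take]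
      have e1 : (List.ofFn a)[i] = a ⟨i, hir⟩ := by rw [List.getElem_ofFn]
      rw [e1, e2]
      exact aux_isSMulRegular_quotient (fun y hy => WR ⟨i, hir⟩ y hy)
    · intro htop
      rw [Ideal.smul_eq_mul, Ideal.mul_top] at htop
      have hle : Ideal.ofList (List.ofFn a) ≤ IsLocalRing.maximalIdeal R := by
        rw [Ideal.span_le]
        intro z hz
        have hz' : z ∈ List.ofFn a := hz
        rw [List.mem_ofFn] at hz'
        obtain ⟨i, rfl⟩ := hz'
        exact haMem i
      exact (IsLocalRing.maximalIdeal.isMaximal R).ne_top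
        (top_le_iff.mp (htop.le.trans hle))
  · -- the intersection formula
    intro m
    apply le_antisymm
    · intro c hc
      obtain ⟨hc1, hc2⟩ := Submodule.mem_inf.mp hc
      have hXr : Ideal.span (Set.range a) = auxX a r := by
        rw [auxX]
        congr 1
        apply congrArg
        funext i
        rw [if_pos i.isLt]
      rw [hXr] at hc1
      obtain ⟨g, hg1, hg2, hg3⟩ := G2 r m c hc1 hc2
      rw [hg3]
      apply Ideal.sum_mem
      intro i _
      have hterm : a i * g i ∈ Ideal.span {a i} * 𝓕.F (m - n i) :=
        Ideal.mul_mem_mul (Ideal.mem_span_singleton_self _) (hg1 i)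
      have hle : Ideal.span {a i} * 𝓕.F (m - n i)
          ≤ ∑ jj : Fin r, Ideal.span {a jj} * 𝓕.F (m - n jj) :=
        Finset.single_le_sum (f := fun jj => Ideal.span {a jj} * 𝓕.F (m - n jj))
          (fun _ _ => bot_le) (Finset.mem_univ i)
      exact hle hterm
    · refine Finset.sum_induction _ (fun I => I ≤ Ideal.span (Set.range a) ⊓ 𝓕.F m)
        ?_ ?_ ?_
      · intro I J hI hJ
        rw [Submodule.add_eq_sup]
        exact sup_le hI hJ
      · exact bot_le
      · intro i _
        apply le_inf
        · calc Ideal.span {a i} * 𝓕.F (m - n i) ≤ Ideal.span {a i} := Ideal.mul_le_left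
            _ ≤ Ideal.span (Set.range a) :=
              Ideal.span_mono (Set.singleton_subset_iff.mpr ⟨i, rfl⟩)
        · calc Ideal.span {a i} * 𝓕.F (m - n i) ≤ 𝓕.F (n i) * 𝓕.F (m - n i) :=
              Ideal.mul_mono_left (Ideal.span_le.mpr (Set.singleton_subset_iff.mpr (ha i)))
            _ ≤ 𝓕.F (n i + (m - n i)) := 𝓕.mul_le _ _
            _ = 𝓕.F m := by congr 1; ring

end
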